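/- arXiv:1005.0404 — 7 statements merged into one kernel-verified Lean document; each statement's English description precedes it below -/
import Mathlib

section
/- Let m11, m12, m22, n11, n21, n22 be nonnegative real numbers and let (R1, R2) be a pair of nonnegative real numbers satisfying the ten inequalities: R1 ≤ m11; R2 ≤ max(m12, m22); R1 + R2 ≤ max(m11, m12) + (m22 − m12)^+; R2 ≤ m12 + n22; R1 + R2 ≤ m22 + max(n11, n21); R1 + R2 ≤ max(m11, m12) + n22; R1 ≤ n11; R2 ≤ max(n21, n22); R2 ≤ m22 + n21; R1 + R2 ≤ max(n21, n22) + (n11 − n21)^+. Then R1 ≤ min(m11, n11), and with r = R1 all four of the following hold: R2 ≤ max(m'12(r), m'22(r)); R2 ≤ m'22(r) + n'21(r); R2 ≤ m'12(r) + n'22(r); R2 ≤ max(n'21(r), n'22(r)). -/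
/-!
Write `x⁺ = max x 0`. After reserving the rate `r = R₁` for the first source, each of the four
bounds on `R₂` follows from the ten inequalities by elementary means: the two "max" bounds split on
which of the two links is the stronger one, and the two "sum" bounds expand `min p q + min s t`
into the four pairwise sums. The only non-obvious input is the symmetry
`max b c + (a - b)⁺ = max a b + (c - b)⁺ = b + (a - b)⁺ + (c - b)⁺`,
which turns the tenth inequality into the sum-rate bound of the diamond network.
-/

section
variable {α : Type*} [AddCommGroup α] [LinearOrder α] [IsOrderedAddMonoid α]

theorem max_add_max_sub_zero_comm (a b c : α) :
    max b c + max (a - b) 0 = max a b + max (c - b) 0 := by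
  grind

theorem le_max_min_sub_min_sub {a b c r x : α} (hx : x ≤ max b c)
    (hrx : r + x ≤ a + max (c - b) 0) :
    x ≤ max (min (a - r) b) (min (a + max (c - b) 0 - r) c) := by
  rcases le_total c b with hcb | hbc
  · rw [max_eq_right (sub_nonpos.mpr hcb), add_zero] at hrx
    exact le_max_of_le_left (le_min (le_sub_iff_add_le'.mpr hrx) (hx.trans_eq (max_eq_left hcb)))
  · exact le_max_of_le_right
      (le_min (le_sub_iff_add_le'.mpr hrx) (hx.trans_eq (max_eq_right hbc)))

theorem le_min_sub_add_min_sub {p q s t r x : α} (hp : r + x ≤ p) (hs : r ≤ s) (ht : 0 ≤ t)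
    (hqs : r + x ≤ q + s) (hqt : x ≤ q + t) : x ≤ min (p - r) q + min (s - r) t := by
  grind

end

theorem dzs_decomposition_general
    (m11 m12 m22 n11 n21 n22 R1 R2 : ℝ)
    (hm12 : 0 ≤ m12)
    (hn21 : 0 ≤ n21)
    (h1 : R1 ≤ m11)
    (h2 : R2 ≤ max m12 m22)
    (h3 : R1 + R2 ≤ max m11 m12 + max (m22 - m12) 0)
    (h4 : R2 ≤ m12 + n22)
    (h5 : R1 + R2 ≤ m22 + max n11 n21)
    (h6 : R1 + R2 ≤ max m11 m12 + n22)
    (h7 : R1 ≤ n11)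
    (h8 : R2 ≤ max n21 n22)
    (h9 : R2 ≤ m22 + n21)
    (h10 : R1 + R2 ≤ max n21 n22 + max (n11 - n21) 0) :
    R1 ≤ min m11 n11 ∧
    R2 ≤ max (min (max m11 m12 - R1) m12)
             (min (max m11 m12 + max (m22 - m12) 0 - R1) m22) ∧
    R2 ≤ min (max m11 m12 + max (m22 - m12) 0 - R1) m22
           + min (max n11 n21 - R1) n21 ∧
    R2 ≤ min (max m11 m12 - R1) m12
           + min (max n11 n21 + max (n22 - n21) 0 - R1) n22 ∧
    R2 ≤ max (min (max n11 n21 - R1) n21)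
             (min (max n11 n21 + max (n22 - n21) 0 - R1) n22) := by
  rw [max_add_max_sub_zero_comm] at h10
  refine ⟨le_min h1 h7, le_max_min_sub_min_sub h2 h3,
    le_min_sub_add_min_sub h3 (le_max_of_le_left h7) hn21 h5 h9, ?_,
    le_max_min_sub_min_sub h8 h10⟩
  rw [add_comm]
  exact le_min_sub_add_min_sub h10 (le_max_of_le_left h1) hm12
    (h6.trans_eq (add_comm _ _)) (h4.trans_eq (add_comm _ _))

theorem dzs_decomposition
    (m11 m12 m22 n11 n21 n22 R1 R2 : ℝ)
    (hm11 : 0 ≤ m11) (hm12 : 0 ≤ m12) (hm22 : 0 ≤ m22)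
    (hn11 : 0 ≤ n11) (hn21 : 0 ≤ n21) (hn22 : 0 ≤ n22)
    (hR1 : 0 ≤ R1) (hR2 : 0 ≤ R2)
    (h1 : R1 ≤ m11)
    (h2 : R2 ≤ max m12 m22)
    (h3 : R1 + R2 ≤ max m11 m12 + max (m22 - m12) 0)
    (h4 : R2 ≤ m12 + n22)
    (h5 : R1 + R2 ≤ m22 + max n11 n21)
    (h6 : R1 + R2 ≤ max m11 m12 + n22)
    (h7 : R1 ≤ n11)
    (h8 : R2 ≤ max n21 n22)
    (h9 : R2 ≤ m22 + n21)
    (h10 : R1 + R2 ≤ max n21 n22 + max (n11 - n21) 0) :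
    R1 ≤ min m11 n11 ∧
    R2 ≤ max (min (max m11 m12 - R1) m12)
             (min (max m11 m12 + max (m22 - m12) 0 - R1) m22) ∧
    R2 ≤ min (max m11 m12 + max (m22 - m12) 0 - R1) m22
           + min (max n11 n21 - R1) n21 ∧
    R2 ≤ min (max m11 m12 - R1) m12
           + min (max n11 n21 + max (n22 - n21) 0 - R1) n22 ∧
    R2 ≤ max (min (max n11 n21 - R1) n21)
             (min (max n11 n21 + max (n22 - n21) 0 - R1) n22) :=
  dzs_decomposition_general m11 m12 m22 n11 n21 n22 R1 R2 hm12 hn21 h1 h2 h3 h4 h5 h6 h7 h8 h9 h10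
end

section
/- Let m11, m12, m22 and R1, R2 be nonnegative real numbers such that R2 ≤ max(m12, m22) and R1 + R2 ≤ max(m11, m12) + (m22 − m12)^+. Then R2 ≤ max(m'12(R1), m'22(R1)). -/
lemma le_min_sub_of_add_le {a b c d : ℝ} (hc : a + b ≤ c) (hd : b ≤ d) : b ≤ min (c - a) d :=
  le_min (by linarith) hd

/-- If `R2 ≤ m22` the second term works; otherwise `m22 < R2 ≤ m12`, so `(m22 - m12)^+ = 0`
and the first term works. -/
theorem dzs_decomposition_first_bound_general
    (m11 m12 m22 R1 R2 : ℝ)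
    (h2 : R2 ≤ max m12 m22)
    (h3 : R1 + R2 ≤ max m11 m12 + max (m22 - m12) 0) :
    R2 ≤ max (min (max m11 m12 - R1) m12)
             (min (max m11 m12 + max (m22 - m12) 0 - R1) m22) := by
  rcases le_or_gt R2 m22 with h22 | h22
  · exact le_max_of_le_right (le_min_sub_of_add_le h3 h22)
  · have h12 : R2 ≤ m12 := by simpa [h22.not_ge] using h2
    rw [max_eq_right (by linarith : m22 - m12 ≤ 0), add_zero] at h3
    exact le_max_of_le_left (le_min_sub_of_add_le h3 h12)

theorem dzs_decomposition_first_bound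
    (m11 m12 m22 R1 R2 : ℝ)
    (hm11 : 0 ≤ m11) (hm12 : 0 ≤ m12) (hm22 : 0 ≤ m22)
    (hR1 : 0 ≤ R1) (hR2 : 0 ≤ R2)
    (h2 : R2 ≤ max m12 m22)
    (h3 : R1 + R2 ≤ max m11 m12 + max (m22 - m12) 0) :
    R2 ≤ max (min (max m11 m12 - R1) m12)
             (min (max m11 m12 + max (m22 - m12) 0 - R1) m22) :=
  dzs_decomposition_first_bound_general m11 m12 m22 R1 R2 h2 h3
end

section
/- Let m11, m12, m22, n11, n21 and R1, R2 be nonnegative real numbers such that R1 ≤ m11, R1 ≤ n11, R1 + R2 ≤ max(m11, m12) + (m22 − m12)^+, R1 + R2 ≤ m22 + max(n11, n21), and R2 ≤ m22 + n21. Then R2 ≤ m'22(R1) + n'21(R1). -/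
/-! Each minimum is attained by one of its arguments, which leaves four linear bounds. The two
containing `max m11 m12 + (m22 - m12)⁺ - R1` follow from `h3`, since the other summand,
`max n11 n21 - R1` or `n21`, is nonnegative; the other two are exactly `h5` and `h9`. -/

theorem le_min_add_min {α : Type*} [LinearOrder α] [Add α] {a x y z w : α}
    (hxy : a ≤ x + y) (hxw : a ≤ x + w) (hzy : a ≤ z + y) (hzw : a ≤ z + w) :
    a ≤ min x z + min y w := by
  rcases min_choice x z with h | h <;> rcases min_choice y w with h' | h' <;>
    rw [h, h'] <;> assumption

theorem dzs_decomposition_second_bound_general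
    (m11 m12 m22 n11 n21 R1 R2 : ℝ)
    (hn21 : 0 ≤ n21)
    (h7 : R1 ≤ n11)
    (h3 : R1 + R2 ≤ max m11 m12 + max (m22 - m12) 0)
    (h5 : R1 + R2 ≤ m22 + max n11 n21)
    (h9 : R2 ≤ m22 + n21) :
    R2 ≤ min (max m11 m12 + max (m22 - m12) 0 - R1) m22
           + min (max n11 n21 - R1) n21 := by
  have hR1 : R1 ≤ max n11 n21 := h7.trans (le_max_left n11 n21)
  apply le_min_add_min <;> linarith

theorem dzs_decomposition_second_bound
    (m11 m12 m22 n11 n21 R1 R2 : ℝ)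
    (hm11 : 0 ≤ m11) (hm12 : 0 ≤ m12) (hm22 : 0 ≤ m22)
    (hn11 : 0 ≤ n11) (hn21 : 0 ≤ n21)
    (hR1 : 0 ≤ R1) (hR2 : 0 ≤ R2)
    (h1 : R1 ≤ m11)
    (h7 : R1 ≤ n11)
    (h3 : R1 + R2 ≤ max m11 m12 + max (m22 - m12) 0)
    (h5 : R1 + R2 ≤ m22 + max n11 n21)
    (h9 : R2 ≤ m22 + n21) :
    R2 ≤ min (max m11 m12 + max (m22 - m12) 0 - R1) m22
           + min (max n11 n21 - R1) n21 :=
  dzs_decomposition_second_bound_general m11 m12 m22 n11 n21 R1 R2 hn21 h7 h3 h5 h9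
end

section
/- Let n11, n21, n22 and R1, R2 be nonnegative real numbers such that R2 ≤ max(n21, n22) and R1 + R2 ≤ max(n21, n22) + (n11 − n21)^+. Then R2 ≤ max(n'21(R1), n'22(R1)). -/
/-! Since `max n11 n21 = n21 + (n11 - n21)⁺`, hypothesis `h10` reads `R1 + R2 ≤ max n11 n21` when
`n22 ≤ n21` and `R1 + R2 ≤ max n11 n21 + (n22 - n21)` otherwise; together with `h8` this puts `R2`
below the first, respectively the second, term of the outer maximum. -/

theorem dzs_decomposition_fourth_bound_general
    (n11 n21 n22 R1 R2 : ℝ)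
    (h8 : R2 ≤ max n21 n22)
    (h10 : R1 + R2 ≤ max n21 n22 + max (n11 - n21) 0) :
    R2 ≤ max (min (max n11 n21 - R1) n21)
             (min (max n11 n21 + max (n22 - n21) 0 - R1) n22) := by
  have hexcess : max n11 n21 - n21 = max (n11 - n21) 0 := by
    rw [← max_sub_sub_right, sub_self]
  rcases le_total n22 n21 with h | h
  · rw [max_eq_left h] at h8 h10
    exact le_max_of_le_left (le_min (by linarith) h8)
  · rw [max_eq_right h] at h8 h10
    rw [max_eq_left (sub_nonneg.mpr h)]
    exact le_max_of_le_right (le_min (by linarith) h8)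

theorem dzs_decomposition_fourth_bound
    (n11 n21 n22 R1 R2 : ℝ)
    (hn11 : 0 ≤ n11) (hn21 : 0 ≤ n21) (hn22 : 0 ≤ n22)
    (hR1 : 0 ≤ R1) (hR2 : 0 ≤ R2)
    (h8 : R2 ≤ max n21 n22)
    (h10 : R1 + R2 ≤ max n21 n22 + max (n11 - n21) 0) :
    R2 ≤ max (min (max n11 n21 - R1) n21)
             (min (max n11 n21 + max (n22 - n21) 0 - R1) n22) :=
  dzs_decomposition_fourth_bound_general n11 n21 n22 R1 R2 h8 h10
end

section
/- Let m11, m12, m22, n11, n12, n22 be nonnegative real numbers. Define λm = min(m11, min(m12, m22)), μm = max(max(m11, m12), max(m22, m11 + m22 − m12)), λn = min(n11, min(n12, n22)), and μn = max(max(n11, n12), max(n22, n11 + n22 − n12)). Then for nonnegative reals R1, R2, the following are equivalent: (i) R1 ≤ m11, R2 ≤ m22, R1 ≤ n11, R2 ≤ n22, R1 + R2 ≤ max(m11, m12) + (m22 − m12)^+ + n12, and R1 + R2 ≤ max(n11, n12) + (n22 − n12)^+ + m12; (ii) there exist nonnegative reals Υ0, Υ1, Υ2 with R1 = Υ0 +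 Υ1, R2 = Υ0 + Υ2, Υ0 ≤ min(λm, λn), Υ0 + Υ1 ≤ min(m11, n11), Υ0 + Υ2 ≤ min(m22, n22), and Υ0 + Υ1 + Υ2 ≤ min(μm, μn). -/
/-! The constraints of the rate-splitting region confine the common rate `Υ0` to the interval
`[max 0 (R1 + R2 - μ), min λ (min R1 R2)]`, where `μ = min μm μn` and `λ = min λm λn`; this
interval is nonempty exactly when `R1, R2 ≤ μ` and `R1 + R2 ≤ μ + λ`. Since
`μm = max m11 m12 + (m22 - m12)⁺` dominates `m11`, `m22` and `m11 + m22 - m12`, the individual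
rate bounds make all but two of the sum-rate constraints `R1 + R2 ≤ μ + x` redundant. -/

theorem exists_rate_split_iff {R1 R2 a b l μ : ℝ} (hR1 : 0 ≤ R1) (hR2 : 0 ≤ R2) (hl : 0 ≤ l) :
    (∃ Y0 Y1 Y2 : ℝ, 0 ≤ Y0 ∧ 0 ≤ Y1 ∧ 0 ≤ Y2 ∧ R1 = Y0 + Y1 ∧ R2 = Y0 + Y2 ∧
      Y0 ≤ l ∧ Y0 + Y1 ≤ a ∧ Y0 + Y2 ≤ b ∧ Y0 + Y1 + Y2 ≤ μ) ↔
    R1 ≤ a ∧ R2 ≤ b ∧ R1 ≤ μ ∧ R2 ≤ μ ∧ R1 + R2 ≤ μ + l := by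
  constructor
  · rintro ⟨Y0, Y1, Y2, h0, h1, h2, rfl, rfl, hY0, ha, hb, hμ⟩
    exact ⟨ha, hb, by linarith, by linarith, by linarith⟩
  · rintro ⟨ha, hb, h1μ, h2μ, hsum⟩
    set Y0 := max 0 (R1 + R2 - μ)
    have hY0R1 : Y0 ≤ R1 := max_le hR1 (by linarith)
    have hY0R2 : Y0 ≤ R2 := max_le hR2 (by linarith)
    have hY0l : Y0 ≤ l := max_le hl (by linarith)
    have hY0μ : R1 + R2 - μ ≤ Y0 := le_max_right _ _
    exact ⟨Y0, R1 - Y0, R2 - Y0, le_max_left _ _, sub_nonneg.2 hY0R1, sub_nonneg.2 hY0R2,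
      by ring, by ring, hY0l, by linarith, by linarith, by linarith⟩

def sumRateBound (a11 a12 a22 : ℝ) : ℝ := max (max a11 a12) (max a22 (a11 + a22 - a12))

section SumRateBound

variable {a11 a12 a22 : ℝ}

theorem sumRateBound_eq (a11 a12 a22 : ℝ) :
    sumRateBound a11 a12 a22 = max a11 a12 + max (a22 - a12) 0 := by
  unfold sumRateBound
  rcases le_total a22 a12 with h | h <;> rcases le_total a11 a12 with h' | h' <;>
    simp only [max_def] <;> split_ifs <;> linarith

theorem le_sumRateBound_left : a11 ≤ sumRateBound a11 a12 a22 :=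
  (le_max_left _ _).trans (le_max_left _ _)

theorem le_sumRateBound_right : a22 ≤ sumRateBound a11 a12 a22 :=
  (le_max_left _ _).trans (le_max_right _ _)

theorem add_sub_le_sumRateBound : a11 + a22 - a12 ≤ sumRateBound a11 a12 a22 :=
  (le_max_right _ _).trans (le_max_right _ _)

theorem add_le_sumRateBound_add_min {R1 R2 b11 b12 b22 : ℝ} (h1a : R1 ≤ a11) (h2a : R2 ≤ a22)
    (h1b : R1 ≤ b11) (h2b : R2 ≤ b22) (h : R1 + R2 ≤ sumRateBound a11 a12 a22 + b12) :
    R1 + R2 ≤ sumRateBound a11 a12 a22 + min (min a11 (min a12 a22)) (min b11 (min b12 b22)) := by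
  have h11 : a11 ≤ sumRateBound a11 a12 a22 := le_sumRateBound_left
  have h22 : a22 ≤ sumRateBound a11 a12 a22 := le_sumRateBound_right
  have h12 : a11 + a22 - a12 ≤ sumRateBound a11 a12 a22 := add_sub_le_sumRateBound
  simp only [← min_add_add_left, le_min_iff]
  refine ⟨⟨?_, ?_, ?_⟩, ?_, ?_, ?_⟩ <;> linarith

end SumRateBound

theorem zz_region_iff {m11 m12 m22 n11 n12 n22 R1 R2 : ℝ} :
    (R1 ≤ m11 ∧ R2 ≤ m22 ∧ R1 ≤ n11 ∧ R2 ≤ n22 ∧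
      R1 + R2 ≤ max m11 m12 + max (m22 - m12) 0 + n12 ∧
      R1 + R2 ≤ max n11 n12 + max (n22 - n12) 0 + m12) ↔
    (R1 ≤ min m11 n11 ∧ R2 ≤ min m22 n22 ∧
      R1 ≤ min (sumRateBound m11 m12 m22) (sumRateBound n11 n12 n22) ∧
      R2 ≤ min (sumRateBound m11 m12 m22) (sumRateBound n11 n12 n22) ∧
      R1 + R2 ≤ min (sumRateBound m11 m12 m22) (sumRateBound n11 n12 n22) +
        min (min m11 (min m12 m22)) (min n11 (min n12 n22))) := by
  rw [← sumRateBound_eq, ← sumRateBound_eq]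
  constructor
  · rintro ⟨h1m, h2m, h1n, h2n, hm, hn⟩
    refine ⟨le_min h1m h1n, le_min h2m h2n,
      le_min (h1m.trans le_sumRateBound_left) (h1n.trans le_sumRateBound_left),
      le_min (h2m.trans le_sumRateBound_right) (h2n.trans le_sumRateBound_right), ?_⟩
    rw [← min_add_add_right]
    refine le_min (add_le_sumRateBound_add_min h1m h2m h1n h2n hm) ?_
    rw [min_comm (min m11 _)]
    exact add_le_sumRateBound_add_min h1n h2n h1m h2m hn
  · rintro ⟨h1, h2, -, -, hsum⟩
    rw [le_min_iff] at h1 h2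
    have hn12 : min (min m11 (min m12 m22)) (min n11 (min n12 n22)) ≤ n12 :=
      min_le_of_right_le (min_le_of_right_le (min_le_left _ _))
    have hm12 : min (min m11 (min m12 m22)) (min n11 (min n12 n22)) ≤ m12 :=
      min_le_of_left_le (min_le_of_right_le (min_le_left _ _))
    exact ⟨h1.1, h2.1, h1.2, h2.2,
      by linarith [min_le_left (sumRateBound m11 m12 m22) (sumRateBound n11 n12 n22)],
      by linarith [min_le_right (sumRateBound m11 m12 m22) (sumRateBound n11 n12 n22)]⟩

theorem dzz_fourier_motzkin
    (m11 m12 m22 n11 n12 n22 : ℝ)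
    (hm11 : 0 ≤ m11) (hm12 : 0 ≤ m12) (hm22 : 0 ≤ m22)
    (hn11 : 0 ≤ n11) (hn12 : 0 ≤ n12) (hn22 : 0 ≤ n22)
    (R1 R2 : ℝ) (hR1 : 0 ≤ R1) (hR2 : 0 ≤ R2) :
    (R1 ≤ m11 ∧ R2 ≤ m22 ∧ R1 ≤ n11 ∧ R2 ≤ n22 ∧
      R1 + R2 ≤ max m11 m12 + max (m22 - m12) 0 + n12 ∧
      R1 + R2 ≤ max n11 n12 + max (n22 - n12) 0 + m12) ↔
    (∃ Y0 Y1 Y2 : ℝ, 0 ≤ Y0 ∧ 0 ≤ Y1 ∧ 0 ≤ Y2 ∧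
      R1 = Y0 + Y1 ∧ R2 = Y0 + Y2 ∧
      Y0 ≤ min (min m11 (min m12 m22)) (min n11 (min n12 n22)) ∧
      Y0 + Y1 ≤ min m11 n11 ∧
      Y0 + Y2 ≤ min m22 n22 ∧
      Y0 + Y1 + Y2 ≤ min (max (max m11 m12) (max m22 (m11 + m22 - m12)))
                         (max (max n11 n12) (max n22 (n11 + n22 - n12)))) := by
  have hl : 0 ≤ min (min m11 (min m12 m22)) (min n11 (min n12 n22)) := by positivity
  exact zz_region_iff.trans (exists_rate_split_iff hR1 hR2 hl).symm
end

section
/- For all real numbers g11, g12, g22 with g11 ≥ 1, g12 ≥ 1, and g22 ≥ 1, one has (1/2)·log₂(1 + g11 + g12) + (1/2)·log₂(1 + g22/g12) ≤ (1/2)·log₂(max{g11, g12, g22, g11·g22/g12}) + (1/2)·log₂ 6. Equivalently, (1 + g11 + g12)·(1 + g22/g12) ≤ 6·max{g11, g12, g22, g11·g22/g12}. -/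
/-! Expanding, `(1 + g₁₁ + g₁₂)(1 + g₂₂/g₁₂)` is a sum of six terms
`1, g₁₁, g₁₂, g₂₂/g₁₂, g₁₁g₂₂/g₁₂, g₂₂`, and each of them is at most the maximum `M`
(using `g₂₂/g₁₂ ≤ g₂₂` since `g₁₂ ≥ 1`), so the product is at most `6M`; taking `log₂`
of both sides gives the claim. -/

open Real

lemma mul_one_add_div_le_six_mul_max {a b c : ℝ} (hb : 1 ≤ b) (hc : 0 ≤ c) :
    (1 + a + b) * (1 + c / b) ≤ 6 * max (max a b) (max c (a * c / b)) := by
  set M := max (max a b) (max c (a * c / b))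
  have ha : a ≤ M := le_trans (le_max_left _ _) (le_max_left _ _)
  have hbM : b ≤ M := le_trans (le_max_right _ _) (le_max_left _ _)
  have hcM : c ≤ M := le_trans (le_max_left _ _) (le_max_right _ _)
  have hacM : a * c / b ≤ M := le_trans (le_max_right _ _) (le_max_right _ _)
  have hcb : c / b ≤ c := div_le_self hc hb
  have hexpand : (1 + a + b) * (1 + c / b) = 1 + a + b + c / b + a * c / b + c := by
    field_simp
    ring
  rw [hexpand]
  linarith

lemma Real.logb_add_logb_le_of_mul_le {b x y z w : ℝ} (hb : 1 < b) (hx : 0 < x) (hy : 0 < y)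
    (hz : 0 < z) (hw : 0 < w) (h : x * y ≤ z * w) :
    logb b x + logb b y ≤ logb b z + logb b w := by
  rw [← logb_mul hx.ne' hy.ne', ← logb_mul hz.ne' hw.ne']
  exact logb_le_logb_of_le hb (mul_pos hx hy) h

theorem gzz_gap_bound (g11 g12 g22 : ℝ)
    (h11 : 1 ≤ g11) (h12 : 1 ≤ g12) (h22 : 1 ≤ g22) :
    (1/2) * Real.logb 2 (1 + g11 + g12) + (1/2) * Real.logb 2 (1 + g22 / g12)
      ≤ (1/2) * Real.logb 2 (max (max g11 g12) (max g22 (g11 * g22 / g12)))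
        + (1/2) * Real.logb 2 6 := by
  have hM : 1 ≤ max (max g11 g12) (max g22 (g11 * g22 / g12)) :=
    le_trans h11 (le_trans (le_max_left _ _) (le_max_left _ _))
  have hprod := mul_one_add_div_le_six_mul_max (a := g11) h12 (zero_le_one.trans h22)
  have hlog := logb_add_logb_le_of_mul_le one_lt_two (by linarith) (by positivity)
    (by linarith) (by norm_num) (hprod.trans_eq (mul_comm _ _))
  rw [← mul_add, ← mul_add]
  exact mul_le_mul_of_nonneg_left hlog (by norm_num)
end

section
/- Let q, n11, n21 be natural numbers with n11 ≤ q and n21 ≤ q, and let J be the q×q down-shift matrix over 𝔽₂ (J(i, j) = 1 iff i = j + 1). Then the 2q×q matrix obtained by stacking J^(q−n11) on top of J^(q−n21) (vertical concatenation) has rank equal to max(n11, n21) over 𝔽₂. -/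
/-!
`J ^ k` is the shift by `k`, of rank `q - k`. If `a ≤ b`, the lower block
`J ^ b = J ^ (b - a) * J ^ a` of the stacked matrix is a multiple of the upper one, so the stacked
matrix has the row space of `J ^ a`, and its rank is `q - min a b`.
-/

lemma Fin.sum_ite_val_eq {M : Type*} [AddCommMonoid M] {q : ℕ} (c : ℕ) (f : ℕ → M) :
    ∑ l : Fin q, (if (l : ℕ) = c then f l else 0) = if c < q then f c else 0 := by
  rw [Fin.sum_univ_eq_sum_range (fun l => if l = c then f l else 0), Finset.sum_ite_eq']
  simp only [Finset.mem_range]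

namespace Matrix

section Shift

variable (R : Type*) [Semiring R] (q : ℕ)

def shiftMatrix (k : ℕ) : Matrix (Fin q) (Fin q) R :=
  of fun i j => if (i : ℕ) = j + k then 1 else 0

variable {R q}

lemma shiftMatrix_mul_shiftMatrix (a b : ℕ) :
    shiftMatrix R q a * shiftMatrix R q b = shiftMatrix R q (a + b) := by
  ext i j
  simp only [shiftMatrix, mul_apply, of_apply, mul_ite, mul_one, mul_zero]
  rw [Fin.sum_ite_val_eq (j + b) (fun l => if (i : ℕ) = l + a then 1 else 0)]
  have := i.isLt
  split_ifs <;> first | rfl | (exfalso; omega)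

lemma shiftMatrix_zero : shiftMatrix R q 0 = 1 := by
  ext i j
  simp [shiftMatrix, one_apply, Fin.ext_iff]

lemma shiftMatrix_one_pow (k : ℕ) : shiftMatrix R q 1 ^ k = shiftMatrix R q k := by
  induction k with
  | zero => exact shiftMatrix_zero.symm
  | succ k ih => rw [pow_succ, ih, shiftMatrix_mul_shiftMatrix]

def shiftSupport (k : ℕ) : Matrix (Fin q) (Fin q) R :=
  diagonal fun j => if (j : ℕ) + k < q then 1 else 0

lemma transpose_shiftMatrix_mul_shiftMatrix (k : ℕ) :
    (shiftMatrix R q k)ᵀ * shiftMatrix R q k = shiftSupport k := by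
  ext j j'
  simp only [shiftMatrix, shiftSupport, mul_apply, transpose_apply, of_apply, diagonal_apply,
    mul_ite, ite_mul, one_mul, zero_mul, mul_zero]
  rw [Fin.sum_ite_val_eq (j' + k) (fun l => if l = (j : ℕ) + k then 1 else 0)]
  by_cases h : j = j'
  · subst h; simp
  · rw [if_neg h]
    split_ifs <;> first | rfl | (exfalso; exact h (Fin.ext (by omega)))

lemma shiftMatrix_mul_shiftSupport (k : ℕ) :
    shiftMatrix R q k * shiftSupport k = shiftMatrix R q k := by
  ext i j
  simp only [shiftMatrix, shiftSupport, mul_diagonal, of_apply, mul_ite, mul_one, mul_zero]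
  have := i.isLt
  split_ifs <;> first | rfl | (exfalso; omega)

end Shift

lemma rank_shiftSupport {K : Type*} [Field K] (q k : ℕ) :
    (shiftSupport k : Matrix (Fin q) (Fin q) K).rank = q - k := by
  classical
  rw [shiftSupport, rank_diagonal, Fintype.card_subtype]
  simp only [ne_eq, ite_eq_right_iff, one_ne_zero, imp_false, not_not]
  calc _ = Finset.card {j : Fin q | (j : ℕ) < q - k} := by
        congr 1; ext j; simp only [Finset.mem_filter, Finset.mem_univ, true_and]; omega
    _ = q - k := by rw [Fin.card_filter_val_lt]; omega

/-- `rank (Aᵀ * A) ≤ rank A` and `A = A * (Aᵀ * A)` pin the rank to that of the diagonal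
`Aᵀ * A`. -/
lemma rank_shiftMatrix {K : Type*} [Field K] (q k : ℕ) :
    (shiftMatrix K q k).rank = q - k := by
  apply le_antisymm
  · calc (shiftMatrix K q k).rank
        = (shiftMatrix K q k * shiftSupport k).rank := by rw [shiftMatrix_mul_shiftSupport]
      _ ≤ (shiftSupport k : Matrix (Fin q) (Fin q) K).rank := rank_mul_le_right _ _
      _ = q - k := rank_shiftSupport q k
  · calc q - k = (shiftSupport k : Matrix (Fin q) (Fin q) K).rank := (rank_shiftSupport q k).symm
      _ = ((shiftMatrix K q k)ᵀ * shiftMatrix K q k).rank := by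
        rw [transpose_shiftMatrix_mul_shiftMatrix]
      _ ≤ (shiftMatrix K q k).rank := rank_mul_le_right _ _

section FromRows

variable {R : Type*} [CommSemiring R] [StrongRankCondition R]
  {m m' n : Type*} [Fintype m] [Fintype m'] [Fintype n] [DecidableEq m]

lemma rank_fromRows_mul_self (A : Matrix m n R) (C : Matrix m' m R) :
    (fromRows A (C * A)).rank = A.rank := by
  apply le_antisymm
  · calc (fromRows A (C * A)).rank = (fromRows 1 C * A).rank := by
          rw [fromRows_mul, Matrix.one_mul]
      _ ≤ A.rank := rank_mul_le_right _ _
  · calc A.rank = (fromCols (1 : Matrix m m R) (0 : Matrix m m' R) * fromRows A (C * A)).rank := by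
          rw [fromCols_mul_fromRows, Matrix.one_mul, Matrix.zero_mul, add_zero]
      _ ≤ (fromRows A (C * A)).rank := rank_mul_le_right _ _

end FromRows

lemma rank_fromRows_comm {R : Type*} [CommSemiring R] {m m' n : Type*} [Fintype n]
    (A : Matrix m n R) (B : Matrix m' n R) :
    (fromRows A B).rank = (fromRows B A).rank := by
  have hswap : fromRows A B = (fromRows B A).submatrix (Equiv.sumComm m m') (Equiv.refl n) := by
    ext (i | i) j <;> rfl
  rw [hswap, rank_submatrix]

lemma rank_fromRows_shiftMatrix {K : Type*} [Field K] (q a b : ℕ) :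
    (fromRows (shiftMatrix K q a) (shiftMatrix K q b)).rank = q - min a b := by
  wlog hab : a ≤ b generalizing a b
  · rw [rank_fromRows_comm, min_comm]
    exact this b a (by omega)
  rw [← Nat.sub_add_cancel hab, ← shiftMatrix_mul_shiftMatrix, rank_fromRows_mul_self,
    rank_shiftMatrix, Nat.sub_add_cancel hab, min_eq_left hab]

end Matrix

open Matrix

theorem rank_vertical_concat_shift (q n11 n21 : ℕ)
    (h1 : n11 ≤ q) (h2 : n21 ≤ q)
    (J : Matrix (Fin q) (Fin q) (ZMod 2))
    (hJ : ∀ i j : Fin q, J i j = if (i : ℕ) = (j : ℕ) + 1 then 1 else 0) :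
    (Matrix.fromRows (J ^ (q - n11)) (J ^ (q - n21))).rank = max n11 n21 := by
  obtain rfl : J = shiftMatrix (ZMod 2) q 1 := Matrix.ext hJ
  rw [shiftMatrix_one_pow, shiftMatrix_one_pow, rank_fromRows_shiftMatrix]
  omega
end
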